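/- arXiv:2006.09286 — 2 statements merged into one kernel-verified Lean document; each statement's English description precedes it below -/
import Mathlib

section
/- With keys kᵢ = (0,…,0,−1,i) for i = 1,…,n, query q with last two coordinates t+1, 1 where 0 ≤ t < n, values v₁,…,vₙ ∈ ℚᵈ, scoring f(q,k) = −|⟨q,k⟩| and hardmax normalization, the attention output Att(q, K, V) = Σᵢ hardmax(f(q,k₁),…,f(q,kₙ))ᵢ · vᵢ equals v_{t+1}. -/
/-- hardmax: uniform weight `1/r` on the `r` argmax coordinates, `0` elsewhere. -/
def hardmax {n : ℕ} (x : Fin n → ℚ) : Fin n → ℚ :=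
  fun i => if ∀ j, x j ≤ x i then
      1 / ((Finset.univ.filter (fun j : Fin n => ∀ k, x k ≤ x j)).card : ℚ)
    else 0

/-- With keys `kᵢ = (0,…,0,−1,i)`, query `q` with last two coordinates `t+1, 1` (`0 ≤ t < n`),
scoring `f(q,k) = −|⟨q,k⟩|` and hardmax normalization, the attention output equals `v_{t+1}`
(the value at label `i = t+1`, i.e. index `⟨t⟩`). -/
theorem attention_retrieves_v_t_succ (n d d' t : ℕ) (ht : t < n)
    (q : Fin (d + 2) → ℚ) (K : Fin n → Fin (d + 2) → ℚ) (v : Fin n → Fin d' → ℚ)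
    (hK : ∀ (i : Fin n) (j : Fin (d + 2)), K i j =
      if (j : ℕ) = d then -1 else if (j : ℕ) = d + 1 then (i : ℚ) + 1 else 0)
    (hq1 : q ⟨d, by omega⟩ = (t : ℚ) + 1) (hq2 : q ⟨d + 1, by omega⟩ = 1) :
    ∑ i, hardmax (fun i => -|∑ j, q j * K i j|) i • v i = v ⟨t, ht⟩ := by
  have hscore : ∀ i : Fin n, (∑ j, q j * K i j) = (i : ℚ) - t := by
    intro i
    have h1 : (∑ j, q j * K i j) =
        q ⟨d, by omega⟩ * K i ⟨d, by omega⟩ + q ⟨d+1, by omega⟩ * K i ⟨d+1, by omega⟩ := by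
      have hne : (⟨d, by omega⟩ : Fin (d+2)) ≠ ⟨d+1, by omega⟩ := by
        intro h; exact absurd (congrArg Fin.val h) (by simp)
      refine Finset.sum_eq_add_of_mem (f := fun j => q j * K i j) _ _ (Finset.mem_univ _)
        (Finset.mem_univ _) hne ?_
      intro k _ hk
      have hk1' : (k : ℕ) ≠ d := fun h => hk.1 (Fin.ext h)
      have hk2' : (k : ℕ) ≠ d + 1 := fun h => hk.2 (Fin.ext h)
      rw [hK]; simp [hk1', hk2']
    rw [h1, hK, hK, hq1, hq2]
    simp
    ring
  have hx : ∀ i : Fin n, (fun i => -|∑ j, q j * K i j|) i = -|(i : ℚ) - t| := by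
    intro i; simp [hscore i]
  set x : Fin n → ℚ := fun i => -|∑ j, q j * K i j| with hxdef
  have htv : x ⟨t, ht⟩ = 0 := by rw [hx]; simp
  have hle : ∀ i, x i ≤ 0 := by intro i; rw [hx]; simp [abs_nonneg]
  have hcond : ∀ i : Fin n, (∀ j, x j ≤ x i) ↔ i = ⟨t, ht⟩ := by
    intro i
    constructor
    · intro h
      have h0 : (0:ℚ) ≤ x i := htv ▸ h ⟨t, ht⟩
      have : |(i : ℚ) - t| ≤ 0 := by have := hx i; linarith [h0, this ▸ h0]
      have h2 : ((i : ℕ) : ℚ) = (t : ℚ) := by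
        have hnn := abs_nonneg ((i : ℚ) - (t:ℚ))
        have h3 : |(i : ℚ) - t| = 0 := le_antisymm this hnn
        have := abs_eq_zero.mp h3
        linarith
      exact Fin.ext (by exact_mod_cast h2)
    · rintro rfl
      intro j; rw [htv]; exact hle j
  have hfilter : (Finset.univ.filter (fun j : Fin n => ∀ k, x k ≤ x j)) = {⟨t, ht⟩} := by
    ext i; simp [hcond i]
  have hhm : ∀ i, hardmax x i = if i = ⟨t, ht⟩ then 1 else 0 := by
    intro i
    unfold hardmax
    rw [hfilter]
    simp [hcond i]
  calc ∑ i, hardmax x i • v i = ∑ i, (if i = ⟨t, ht⟩ then 1 else (0:ℚ)) • v i := by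
        apply Finset.sum_congr rfl; intro i _; rw [hhm]
    _ = v ⟨t, ht⟩ := by
        rw [Finset.sum_eq_single ⟨t, ht⟩]
        · simp
        · intro b _ hb; simp [hb]
        · intro h; exact absurd (Finset.mem_univ _) h
end

section
/- Define Δ_t = σ(ω_t − ω_{t−1}) componentwise, where σ is the saturated linear activation. Then for 1 ≤ t ≤ n and every k: Δ_{t,k} > 0 if s_t = β_k, and Δ_{t,k} = 0 otherwise. -/
/-- The saturated linear activation function on ℚ. -/
def satq (x : ℚ) : ℚ := if x < 0 then 0 else if x ≤ 1 then x else 1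

/-- `omegaVec s t` is the vector of empirical symbol frequencies of `s₀,…,s_t`. -/
def omegaVec {m : ℕ} (s : ℕ → Fin m) (t : ℕ) : Fin m → ℚ :=
  fun k => (∑ j ∈ Finset.range (t + 1), if s j = k then (1 : ℚ) else 0) / (t + 1)

/-!
Write `c` for the number of occurrences of `β_k` among `s₀,…,s_{t-1}`. Then
`ω_{t,k} - ω_{t-1,k} = (t·[s_t = β_k] - c) / (t(t+1))`. If `s_t ≠ β_k` this is `-c/(t(t+1)) ≤ 0`.
If `s_t = β_k`, then `β_k ≠ #`, so `s₀ = #` is not an occurrence and `c ≤ t - 1 < t`; the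
difference is then positive.
-/

open Finset

lemma satq_pos {x : ℚ} (hx : 0 < x) : 0 < satq x := by
  unfold satq
  split_ifs <;> linarith

lemma satq_eq_zero_of_nonpos {x : ℚ} (hx : x ≤ 0) : satq x = 0 := by
  unfold satq
  split_ifs <;> linarith

lemma card_filter_lt_card_of_not {α : Type*} {p : α → Prop} [DecidablePred p] {s : Finset α}
    {a : α} (ha : a ∈ s) (hpa : ¬p a) : #{x ∈ s | p x} < #s :=
  (card_filter_le s p).lt_of_ne fun h => hpa (card_filter_eq_iff.mp h a ha)

section omegaVec

variable {m : ℕ} (s : ℕ → Fin m) (k : Fin m)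

lemma omegaVec_succ_sub (u : ℕ) :
    omegaVec s (u + 1) k - omegaVec s u k =
      ((u + 1) * (if s (u + 1) = k then 1 else 0) - #{j ∈ range (u + 1) | s j = k})
        / ((u + 1) * (u + 2)) := by
  simp only [omegaVec, sum_range_succ (n := u + 1), sum_boole]
  push_cast
  field_simp
  ring

lemma omegaVec_succ_sub_pos {u : ℕ} (h : s (u + 1) = k) (h0 : s 0 ≠ k) :
    0 < omegaVec s (u + 1) k - omegaVec s u k := by
  have hc : #{j ∈ range (u + 1) | s j = k} < u + 1 := by
    simpa using card_filter_lt_card_of_not (mem_range.mpr u.succ_pos) h0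
  rw [omegaVec_succ_sub, if_pos h, mul_one]
  apply div_pos <;> [exact sub_pos.mpr (by exact_mod_cast hc); positivity]

lemma omegaVec_succ_sub_nonpos {u : ℕ} (h : s (u + 1) ≠ k) :
    omegaVec s (u + 1) k - omegaVec s u k ≤ 0 := by
  rw [omegaVec_succ_sub, if_neg h, mul_zero, zero_sub]
  exact div_nonpos_of_nonpos_of_nonneg (neg_nonpos.mpr (Nat.cast_nonneg _)) (by positivity)

end omegaVec

/-- With `Δ_t = σ(ω_t − ω_{t−1})` componentwise, for `1 ≤ t ≤ n` and every `k`: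
`Δ_{t,k} > 0` if `s_t = β_k`, and `Δ_{t,k} = 0` otherwise
(where `s₀ = #` occurs only at position 0). -/
theorem Delta_pos_iff {m n : ℕ} (s : ℕ → Fin m) (hash : Fin m)
    (hs0 : s 0 = hash) (hne : ∀ j, 1 ≤ j → j ≤ n → s j ≠ hash)
    (t : ℕ) (ht1 : 1 ≤ t) (htn : t ≤ n) (k : Fin m) :
    (s t = k → 0 < satq (omegaVec s t k - omegaVec s (t - 1) k)) ∧
    (s t ≠ k → satq (omegaVec s t k - omegaVec s (t - 1) k) = 0) := by
  obtain ⟨u, rfl⟩ : ∃ u, t = u + 1 := Nat.exists_eq_add_of_le' ht1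
  rw [Nat.add_sub_cancel]
  refine ⟨fun hk => satq_pos (omegaVec_succ_sub_pos s k hk ?_),
    fun hk => satq_eq_zero_of_nonpos (omegaVec_succ_sub_nonpos s k hk)⟩
  rw [hs0, ← hk]
  exact (hne (u + 1) ht1 htn).symm
end
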